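/- If H is a retract of a graph G, then B(H) ≤ B(G). -/

import Mathlib

open SimpleGraph

/-- A token may stay in place or move along an edge. -/
def stepRel {V : Type*} (G : SimpleGraph V) (x y : V) : Prop := x = y ∨ G.Adj x y

/-- The sequence of positions in the pursuit game: `(gamePlay ...) n` is the pair
(pursuer positions, evader position) after `n` full rounds; at time `0` the pursuers
have been placed (`binit`) and then the evader placed (`pinit binit`). In each round,
the pursuers move first (via `bmove`, seeing the current state), then the evader moves
(via `pmove`, seeing the pursuers' new positions and his own position). -/
def gamePlay {V : Type*} {k : ℕ} (binit : Fin k → V) (bmove : (Fin k → V) → V → Fin k → V)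
    (pinit : (Fin k → V) → V) (pmove : (Fin k → V) → V → V) : ℕ → (Fin k → V) × V
  | 0 => (binit, pinit binit)
  | n + 1 =>
      let s := gamePlay binit bmove pinit pmove n
      (bmove s.1 s.2, pmove (bmove s.1 s.2) s.2)

/-- `k` bodyguards have a winning strategy on `G`: they can place themselves and move so
that, against every president strategy, after finitely many rounds they occupy the whole
open neighbourhood of the president's vertex at the end of every bodyguard turn. -/
def BodyguardsWin {V : Type*} (G : SimpleGraph V) (k : ℕ) : Prop :=
  ∃ (binit : Fin k → V) (bmove : (Fin k → V) → V → Fin k → V),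
    (∀ bs p i, stepRel G (bs i) (bmove bs p i)) ∧
    ∀ (pinit : (Fin k → V) → V) (pmove : (Fin k → V) → V → V),
      (∀ bs p, stepRel G p (pmove bs p)) →
      ∃ N, ∀ n, N ≤ n →
        ∀ v, G.Adj (gamePlay binit bmove pinit pmove n).2 v →
          ∃ i, (gamePlay binit bmove pinit pmove (n + 1)).1 i = v

/-- The bodyguard number of a finite graph. -/
noncomputable def bodyguardNumber {V : Type*} (G : SimpleGraph V) [Fintype V] : ℕ :=
  sInf {k | BodyguardsWin G k}

/-- `k` cops have a winning strategy in classic Cops and Robber on `G`: at some point a cop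
occupies the same vertex as the robber (either right after a cop move, or at the end of a
round). -/
def CopsWin {V : Type*} (G : SimpleGraph V) (k : ℕ) : Prop :=
  ∃ (cinit : Fin k → V) (cmove : (Fin k → V) → V → Fin k → V),
    (∀ cs r i, stepRel G (cs i) (cmove cs r i)) ∧
    ∀ (rinit : (Fin k → V) → V) (rmove : (Fin k → V) → V → V),
      (∀ cs r, stepRel G r (rmove cs r)) →
      ∃ n i, (gamePlay cinit cmove rinit rmove (n + 1)).1 i =
                (gamePlay cinit cmove rinit rmove n).2 ∨
             (gamePlay cinit cmove rinit rmove n).1 i =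
                (gamePlay cinit cmove rinit rmove n).2

/-- The cop number of a finite graph. -/
noncomputable def copNumber {V : Type*} (G : SimpleGraph V) [Fintype V] : ℕ :=
  sInf {k | CopsWin G k}

/-!
The surrounding game is a co-Büchi game for the guards (eventually they always surround the
president), so it is positionally determined on a finite graph: either some placement of the
guards wins with a positional strategy, or the president has a positional strategy that escapes
from every placement, even against guards who remember the whole play. On a retract `H` of `G`
the second alternative cannot occur when `k` guards win on `G`: let the president play his
`H`-strategy against the shadows `r ∘ bs` of the `G`-guards. Since `r` maps moves to moves, the
shadows move legally in `H`, and since `H ⊆ G` is fixed by `r`, guards surrounding the president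
in `G` have shadows surrounding him in `H`, which the president's strategy rules out.
-/

namespace OrderHom

variable {α : Type*} [CompleteLattice α] (f : α →o α)

theorem iterate_bot_le_lfp (n : ℕ) : f^[n] ⊥ ≤ f.lfp := by
  induction n with
  | zero => exact bot_le
  | succ n ih =>
    rw [Function.iterate_succ_apply']
    exact f.map_le_lfp ih

theorem gfp_le_iterate_top (n : ℕ) : f.gfp ≤ f^[n] ⊤ := by
  induction n with
  | zero => exact le_top
  | succ n ih =>
    rw [Function.iterate_succ_apply']
    exact f.gfp_le_map ih

theorem exists_iterate_bot_eq_lfp [WellFoundedGT α] : ∃ n, f^[n] ⊥ = f.lfp := by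
  obtain ⟨n, hn⟩ := WellFoundedGT.monotone_chain_condition
    ⟨fun n => f^[n] ⊥, Monotone.monotone_iterate_of_le_map f.monotone bot_le⟩
  refine ⟨n, le_antisymm (f.iterate_bot_le_lfp n) (f.lfp_le ?_)⟩
  rw [← Function.iterate_succ_apply' f]
  exact (hn (n + 1) n.le_succ).ge

theorem exists_iterate_top_eq_gfp [WellFoundedLT α] : ∃ n, f^[n] ⊤ = f.gfp := by
  obtain ⟨n, hn⟩ := WellFoundedLT.antitone_chain_condition
    (Monotone.antitone_iterate_of_map_le f.monotone (le_top : f ⊤ ≤ ⊤))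
  refine ⟨n, le_antisymm (f.le_gfp ?_) (f.gfp_le_iterate_top n)⟩
  rw [← Function.iterate_succ_apply' f]
  exact (hn (n + 1) n.le_succ).le

end OrderHom

section WinningRegion

variable {U : Type*} (H : SimpleGraph U) {k : ℕ}

def Surrounds (bs : Fin k → U) (p : U) : Prop := ∀ v, H.Adj p v → ∃ i, bs i = v

variable (k) in
def guardPre :
    Set ((Fin k → U) × U) →o Set ((Fin k → U) × U) →o Set ((Fin k → U) × U) where
  toFun A :=
    { toFun B := {x | ∃ bs', (∀ i, stepRel H (x.1 i) (bs' i)) ∧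
        ∀ p', stepRel H x.2 p' → (bs', p') ∈ A ∨ (Surrounds H bs' x.2 ∧ (bs', p') ∈ B)}
      monotone' B B' hB := by
        rintro x ⟨bs', hmove, hreply⟩
        exact ⟨bs', hmove, fun p' hp' => (hreply p' hp').imp_right (And.imp_right (@hB _))⟩ }
  monotone' A A' hA B := by
    rintro x ⟨bs', hmove, hreply⟩
    exact ⟨bs', hmove, fun p' hp' => (hreply p' hp').imp_left (@hA _)⟩

variable (k) in
def winStage (i : ℕ) : Set ((Fin k → U) × U) := (OrderHom.gfp.comp (guardPre H k))^[i] ⊥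

variable (k) in
/-- `μZ. νA. guardPre H k Z A`, the fixpoint formula for the co-Büchi objective "eventually the
guards always surround the president": in each round the guards either surround him and stay in
`A`, or force progress towards the smaller region `Z`. -/
def winRegion : Set ((Fin k → U) × U) := (OrderHom.gfp.comp (guardPre H k)).lfp

theorem winStage_succ (i : ℕ) :
    winStage H k (i + 1) = guardPre H k (winStage H k i) (winStage H k (i + 1)) := by
  rw [winStage, Function.iterate_succ_apply']
  exact (OrderHom.map_gfp _).symm

theorem winStage_subset_winRegion (i : ℕ) : winStage H k i ⊆ winRegion H k :=
  OrderHom.iterate_bot_le_lfp _ i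

theorem winRegion_eq_gfp : winRegion H k = (guardPre H k (winRegion H k)).gfp :=
  (OrderHom.map_lfp _).symm

noncomputable def winLevel (x : (Fin k → U) × U) : ℕ := sInf {i | x ∈ winStage H k i}

variable [Finite U]

theorem exists_mem_winStage {x : (Fin k → U) × U} (hx : x ∈ winRegion H k) :
    ∃ i, x ∈ winStage H k i := by
  obtain ⟨n, hn⟩ := OrderHom.exists_iterate_bot_eq_lfp (OrderHom.gfp.comp (guardPre H k))
  exact ⟨n, by rwa [winStage, hn]⟩

theorem exists_guardMove {x : (Fin k → U) × U} (hx : x ∈ winRegion H k) :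
    ∃ bs', (∀ i, stepRel H (x.1 i) (bs' i)) ∧ ∀ p', stepRel H x.2 p' →
      (bs', p') ∈ winRegion H k ∧ winLevel H (bs', p') ≤ winLevel H x ∧
        (¬ Surrounds H bs' x.2 → winLevel H (bs', p') < winLevel H x) := by
  have hmem : x ∈ winStage H k (winLevel H x) := Nat.sInf_mem (exists_mem_winStage H hx)
  obtain ⟨l, hl⟩ : ∃ l, winLevel H x = l + 1 :=
    Nat.exists_eq_succ_of_ne_zero fun h => by rw [h] at hmem; exact hmem
  rw [hl, winStage_succ] at hmem
  obtain ⟨bs', hmove, hreply⟩ := hmem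
  refine ⟨bs', hmove, fun p' hp' => ?_⟩
  rcases hreply p' hp' with hA | ⟨hsurr, hB⟩
  · have : winLevel H (bs', p') ≤ l := Nat.sInf_le hA
    exact ⟨winStage_subset_winRegion H l hA, by omega, fun _ => by omega⟩
  · have : winLevel H (bs', p') ≤ l + 1 := Nat.sInf_le hB
    exact ⟨winStage_subset_winRegion H _ hB, by omega, absurd hsurr⟩

open Classical in
noncomputable def guardStrategy (bs : Fin k → U) (p : U) : Fin k → U :=
  if h : (bs, p) ∈ winRegion H k then (exists_guardMove H h).choose else bs

theorem stepRel_guardStrategy (bs : Fin k → U) (p : U) (i : Fin k) :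
    stepRel H (bs i) (guardStrategy H bs p i) := by
  unfold guardStrategy
  split_ifs with h
  exacts [(exists_guardMove H h).choose_spec.1 i, Or.inl rfl]

theorem bodyguardsWin_of_forall_mem_winRegion (bs₀ : Fin k → U)
    (h : ∀ p, (bs₀, p) ∈ winRegion H k) : BodyguardsWin H k := by
  refine ⟨bs₀, guardStrategy H, stepRel_guardStrategy H, fun pinit pmove hpmove => ?_⟩
  set play := gamePlay bs₀ (guardStrategy H) pinit pmove
  have hstep : ∀ n, play n ∈ winRegion H k →
      play (n + 1) ∈ winRegion H k ∧ winLevel H (play (n + 1)) ≤ winLevel H (play n) ∧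
        (¬ Surrounds H (play (n + 1)).1 (play n).2 →
          winLevel H (play (n + 1)) < winLevel H (play n)) := by
    intro n hn
    have hplay : play (n + 1) = (guardStrategy H (play n).1 (play n).2,
        pmove (guardStrategy H (play n).1 (play n).2) (play n).2) := rfl
    rw [hplay, guardStrategy, dif_pos hn]
    exact (exists_guardMove H hn).choose_spec.2 _ (hpmove _ _)
  have hwin : ∀ n, play n ∈ winRegion H k := fun n => by
    induction n with
    | zero => exact h _
    | succ n ih => exact (hstep n ih).1
  obtain ⟨N, hN⟩ := WellFoundedLT.antitone_chain_condition
    (antitone_nat_of_succ_le (f := fun n => winLevel H (play n)) fun n => (hstep n (hwin n)).2.1)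
  refine ⟨N, fun n hn => not_not.1 fun hsurr => ?_⟩
  have hdrop := (hstep n (hwin n)).2.2 hsurr
  have hn₀ := hN n hn
  have hn₁ := hN (n + 1) (by omega)
  omega

end WinningRegion

section President

variable {U : Type*} (H : SimpleGraph U) {k : ℕ}

noncomputable def escapeRank (x : (Fin k → U) × U) : ℕ :=
  sInf {j | x ∉ (guardPre H k (winRegion H k))^[j] ⊤}

variable (k) in
def escapes (bs' : Fin k → U) (p : U) : Set U :=
  {p' | stepRel H p p' ∧ (bs', p') ∉ winRegion H k}

open Classical in
noncomputable def presidentStrategy (bs' : Fin k → U) (p : U) : U :=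
  if h : (escapes H k bs' p).Nonempty then
    Function.argminOn (fun p' => escapeRank H (bs', p')) _ h
  else p

theorem stepRel_presidentStrategy (bs' : Fin k → U) (p : U) :
    stepRel H p (presidentStrategy H bs' p) := by
  unfold presidentStrategy
  split_ifs with h
  exacts [(Function.argminOn_mem _ _ h).1, Or.inl rfl]

variable [Finite U]

theorem exists_notMem_iterate_guardPre {x : (Fin k → U) × U} (hx : x ∉ winRegion H k) :
    ∃ j, x ∉ (guardPre H k (winRegion H k))^[j] ⊤ := by
  obtain ⟨n, hn⟩ := OrderHom.exists_iterate_top_eq_gfp (guardPre H k (winRegion H k))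
  exact ⟨n, by rwa [hn, ← winRegion_eq_gfp]⟩

theorem exists_presidentMove {x : (Fin k → U) × U} (hx : x ∉ winRegion H k) {bs' : Fin k → U}
    (hmove : ∀ i, stepRel H (x.1 i) (bs' i)) :
    ∃ p', stepRel H x.2 p' ∧ (bs', p') ∉ winRegion H k ∧
      (Surrounds H bs' x.2 → escapeRank H (bs', p') < escapeRank H x) := by
  have hmem : x ∉ (guardPre H k (winRegion H k))^[escapeRank H x] ⊤ :=
    Nat.sInf_mem (exists_notMem_iterate_guardPre H hx)
  obtain ⟨j, hj⟩ : ∃ j, escapeRank H x = j + 1 :=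
    Nat.exists_eq_succ_of_ne_zero fun h => by rw [h] at hmem; exact hmem trivial
  rw [hj, Function.iterate_succ_apply'] at hmem
  by_contra! hcaught
  refine hmem ⟨bs', hmove, fun p' hp' => or_iff_not_imp_left.2 fun hW => ?_⟩
  obtain ⟨hsurr, hrank⟩ := hcaught p' hp' hW
  refine ⟨hsurr, not_not.1 fun hout => ?_⟩
  have : escapeRank H (bs', p') ≤ j := Nat.sInf_le hout
  omega

theorem presidentStrategy_spec {x : (Fin k → U) × U} (hx : x ∉ winRegion H k)
    {bs' : Fin k → U} (hmove : ∀ i, stepRel H (x.1 i) (bs' i)) :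
    (bs', presidentStrategy H bs' x.2) ∉ winRegion H k ∧ (Surrounds H bs' x.2 →
      escapeRank H (bs', presidentStrategy H bs' x.2) < escapeRank H x) := by
  obtain ⟨q, hq, hqW, hqrank⟩ := exists_presidentMove H hx hmove
  have hqesc : q ∈ escapes H k bs' x.2 := ⟨hq, hqW⟩
  rw [presidentStrategy, dif_pos ⟨q, hqesc⟩]
  let rank (p' : U) := escapeRank H (bs', p')
  exact ⟨(Function.argminOn_mem rank _ ⟨q, hqesc⟩).2,
    fun hsurr => (Function.argminOn_le rank _ hqesc).trans_lt (hqrank hsurr)⟩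

theorem not_eventually_surrounds (b : ℕ → Fin k → U) (p : ℕ → U)
    (hb : ∀ n i, stepRel H (b n i) (b (n + 1) i))
    (hp : ∀ n, p (n + 1) = presidentStrategy H (b (n + 1)) (p n))
    (h₀ : (b 0, p 0) ∉ winRegion H k) :
    ¬ ∀ᶠ n in Filter.atTop, Surrounds H (b (n + 1)) (p n) := by
  have hstep : ∀ n, (b n, p n) ∉ winRegion H k → (b (n + 1), p (n + 1)) ∉ winRegion H k ∧
      (Surrounds H (b (n + 1)) (p n) →
        escapeRank H (b (n + 1), p (n + 1)) < escapeRank H (b n, p n)) := fun n hn =>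
    hp n ▸ presidentStrategy_spec H hn (hb n)
  have hout : ∀ n, (b n, p n) ∉ winRegion H k := fun n => by
    induction n with
    | zero => exact h₀
    | succ n ih => exact (hstep n ih).1
  rw [Filter.eventually_atTop]
  rintro ⟨N, hsurr⟩
  refine not_strictAnti_of_wellFoundedLT (fun t => escapeRank H (b (N + t), p (N + t)))
    (strictAnti_nat_of_succ_lt fun t => ?_)
  exact (hstep (N + t) (hout _)).2 (hsurr _ (Nat.le_add_right N t))

end President

theorem stepRel_map {V W : Type*} {G : SimpleGraph V} {H : SimpleGraph W} (f : V → W)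
    (hf : ∀ a b, G.Adj a b → H.Adj (f a) (f b) ∨ f a = f b) {x y : V} (h : stepRel G x y) :
    stepRel H (f x) (f y) := by
  rcases h with rfl | hxy
  exacts [Or.inl rfl, (hf x y hxy).symm]

theorem bodyguardsWin_of_surjective {V : Type*} (G : SimpleGraph V) {k : ℕ} {binit : Fin k → V}
    (hsurj : Function.Surjective binit) : BodyguardsWin G k := by
  refine ⟨binit, fun bs _ => bs, fun _ _ _ => Or.inl rfl, fun pinit pmove _ => ⟨0, ?_⟩⟩
  have hstay : ∀ n, (gamePlay binit (fun bs _ => bs) pinit pmove n).1 = binit := fun n => by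
    induction n with
    | zero => rfl
    | succ n ih => exact ih
  intro n _ v _
  rw [hstay]
  exact hsurj v

theorem bodyguardsWin_bodyguardNumber {V : Type*} [Fintype V] (G : SimpleGraph V) :
    BodyguardsWin G (bodyguardNumber G) :=
  Nat.sInf_mem (s := {k | BodyguardsWin G k})
    ⟨_, bodyguardsWin_of_surjective G (Fintype.equivFin V).symm.surjective⟩

theorem BodyguardsWin.bodyguardNumber_le {V : Type*} [Fintype V] {G : SimpleGraph V} {k : ℕ}
    (h : BodyguardsWin G k) : bodyguardNumber G ≤ k :=
  Nat.sInf_le h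

section Retract

variable {V : Type*} {G : SimpleGraph V} {s : Set V} {H : SimpleGraph s}

theorem Surrounds.retract (hsub : ∀ a b : s, H.Adj a b → G.Adj (a : V) (b : V)) {r : V → s}
    (hfix : ∀ a : s, r (a : V) = a) {k : ℕ} {bs : Fin k → V} {p : s}
    (h : Surrounds G bs p) : Surrounds H (fun i => r (bs i)) p := fun v hv => by
  obtain ⟨i, hi⟩ := h v (hsub p v hv)
  exact ⟨i, show r (bs i) = v by rw [hi, hfix]⟩

theorem BodyguardsWin.retract [Finite V] (hsub : ∀ a b : s, H.Adj a b → G.Adj (a : V) (b : V))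
    (r : V → s) (hhom : ∀ a b : V, G.Adj a b → H.Adj (r a) (r b) ∨ r a = r b)
    (hfix : ∀ a : s, r (a : V) = a) {k : ℕ} (hG : BodyguardsWin G k) : BodyguardsWin H k := by
  classical
  by_contra hH
  have hescape : ∀ bs₀ : Fin k → s, ∃ p, (bs₀, p) ∉ winRegion H k := fun bs₀ => by
    by_contra! hall
    exact hH (bodyguardsWin_of_forall_mem_winRegion H bs₀ hall)
  choose pstart hpstart using hescape
  obtain ⟨binit, bmove, hbmove, hwin⟩ := hG
  let shadow (bs : Fin k → V) (i : Fin k) : s := r (bs i)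
  let pinit (bs : Fin k → V) : V := pstart (shadow bs)
  let pmove (bs : Fin k → V) (p : V) : V :=
    if hp : p ∈ s then (presidentStrategy H (shadow bs) ⟨p, hp⟩ : s) else p
  have hpmove : ∀ bs p, stepRel G p (pmove bs p) := by
    intro bs p
    unfold pmove
    split_ifs with hp
    exacts [stepRel_map Subtype.val (fun a b hab => Or.inl (hsub a b hab))
      (stepRel_presidentStrategy H (shadow bs) ⟨p, hp⟩), Or.inl rfl]
  obtain ⟨N, hN⟩ := hwin pinit pmove hpmove
  set play := gamePlay binit bmove pinit pmove
  have hs : ∀ n, (play n).2 ∈ s := fun n => by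
    induction n with
    | zero => exact (pstart _).2
    | succ n ih =>
      change pmove _ (play n).2 ∈ s
      simp only [pmove, dif_pos ih]
      exact Subtype.coe_prop _
  refine not_eventually_surrounds H (fun n => shadow (play n).1) (fun n => ⟨(play n).2, hs n⟩)
    (fun n i => stepRel_map r hhom (hbmove _ _ i)) (fun n => Subtype.ext (dif_pos (hs n)))
    (hpstart _)
    (Filter.eventually_atTop.2 ⟨N, fun n hn => Surrounds.retract hsub hfix (hN n hn)⟩)

end Retract

/-- If `H` is a retract of `G` (a subgraph of `G` together with a retraction
`r : V(G) → V(H)` which fixes `V(H)` pointwise and preserves adjacency-or-equality),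
then `B(H) ≤ B(G)`. -/
theorem bodyguardNumber_le_of_retract {V : Type*} [Fintype V] (G : SimpleGraph V)
    (s : Set V) [DecidablePred (· ∈ s)] (H : SimpleGraph s)
    (hsub : ∀ a b : s, H.Adj a b → G.Adj (a : V) (b : V))
    (r : V → s)
    (hhom : ∀ a b : V, G.Adj a b → H.Adj (r a) (r b) ∨ r a = r b)
    (hfix : ∀ a : s, r (a : V) = a) :
    bodyguardNumber H ≤ bodyguardNumber G :=
  ((bodyguardsWin_bodyguardNumber G).retract hsub r hhom hfix).bodyguardNumber_le
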